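/- For every ρ ∈ (0,1] there exists n₀ such that the following holds for all n ≥ n₀ and all N ∈ ℕ. Let G be a graph on n vertices and suppose there are sets U₁, …, U_N ⊆ V(G) satisfying: (i) |U_i| is even and δ(G[U_i]) ≥ (1/2 + 4ρ^{1/6})|U_i| for all i ∈ [N]; (ii) |U_i| ≥ ρ^{4/3} n for all i ∈ [N]; (iii) |U_i ∩ U_j| ≤ ρ² n for all 1 ≤ i < j ≤ N; (iv) every vertex u ∈ V(G) is contained in at most ρn of the sets U_i. Then for every i ∈ [N] there exists a perfect matching M_i of G[U_i] such that the matchings M₁, …, M_N are pairwise edge-disjoint. -/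

import Mathlib

/-- `M` is a perfect matching of the induced subgraph `G[U]`: every element of `M` is an
edge of `G` with both endpoints in `U`, and every vertex of `U` lies in exactly one
element of `M`. -/
def IsPerfectMatchingOn {V : Type*} (G : SimpleGraph V) (U : Set V)
    (M : Set (Sym2 V)) : Prop :=
  (∀ e ∈ M, e ∈ G.edgeSet ∧ ∀ v ∈ e, v ∈ U) ∧
  ∀ v ∈ U, ∃! e, e ∈ M ∧ v ∈ e


open Finset

set_option linter.unusedSectionVars false

attribute [local instance] Classical.propDecidable

namespace EDPM

variable {V : Type*} [Fintype V] [DecidableEq V]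

/-- A perfect matching (as an involution) of `H` on the vertex set `W`. -/
def PMon (H : SimpleGraph V) (W : Finset V) (f : V → V) : Prop :=
  (∀ x ∈ W, f x ∈ W ∧ f (f x) = x ∧ H.Adj x (f x)) ∧ ∀ x, x ∉ W → f x = x

namespace PMon

variable {H : SimpleGraph V} {W : Finset V} {f : V → V}

theorem mem (h : PMon H W f) {x : V} (hx : x ∈ W) : f x ∈ W := (h.1 x hx).1
theorem invol (h : PMon H W f) (x : V) : f (f x) = x := by
  by_cases hx : x ∈ W
  · exact (h.1 x hx).2.1
  · rw [h.2 x hx, h.2 x hx]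
theorem adj (h : PMon H W f) {x : V} (hx : x ∈ W) : H.Adj x (f x) := (h.1 x hx).2.2
theorem ne (h : PMon H W f) {x : V} (hx : x ∈ W) : f x ≠ x := fun he => (h.adj hx).ne' he
theorem injective (h : PMon H W f) : Function.Injective f :=
  Function.Involutive.injective h.invol

end PMon

/-- the 4-point surgery on a matching: `a ↦ c`, `c ↦ a`, `b ↦ d`, `d ↦ b`. -/
def reroute (f : V → V) (a b c d : V) : V → V := fun z =>
  if z = a then c else if z = c then a else if z = b then d else if z = d then b else f z

lemma reroute_else {f : V → V} {a b c d z : V}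
    (h1 : z ≠ a) (h2 : z ≠ c) (h3 : z ≠ b) (h4 : z ≠ d) :
    reroute f a b c d z = f z := by simp [reroute, h1, h2, h3, h4]

/-- switching surgery preserves perfect matchings. -/
theorem pmon_switch {H : SimpleGraph V} {W : Finset V} {f : V → V}
    (hf : PMon H W f) {x y u v : V}
    (hx : x ∈ W) (hu : u ∈ W) (hfx : f x = y) (hfu : f u = v)
    (hux : u ≠ x) (huy : u ≠ y) (hvx : v ≠ x)
    (hxu : H.Adj x u) (hyv : H.Adj y v) :
    PMon H W (reroute f x y u v) := by
  have hyW : y ∈ W := hfx ▸ hf.mem hx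
  have hvW : v ∈ W := hfu ▸ hf.mem hu
  have hfy : f y = x := by rw [← hfx, hf.invol]
  have hfv : f v = u := by rw [← hfu, hf.invol]
  have hxy : x ≠ y := fun h => hf.ne hx (by rw [hfx, h])
  have huv : u ≠ v := fun h => hf.ne hu (by rw [hfu, h])
  have hvy : v ≠ y := fun h => hux (by rw [← hfv, h, hfy])
  have hgx : reroute f x y u v x = u := by simp [reroute]
  have hgu : reroute f x y u v u = x := by simp [reroute, hux]
  have hgy : reroute f x y u v y = v := by simp [reroute, hxy.symm, huy.symm]
  have hgv : reroute f x y u v v = y := by simp [reroute, hvx, huv.symm, hvy]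
  constructor
  · intro z hz
    rcases eq_or_ne z x with h | hzx
    · rw [h, hgx]; exact ⟨hu, by rw [hgu], hxu⟩
    rcases eq_or_ne z u with h | hzu
    · rw [h, hgu]; exact ⟨hx, by rw [hgx], hxu.symm⟩
    rcases eq_or_ne z y with h | hzy
    · rw [h, hgy]; exact ⟨hvW, by rw [hgv], hyv⟩
    rcases eq_or_ne z v with h | hzv
    · rw [h, hgv]; exact ⟨hyW, by rw [hgy], hyv.symm⟩
    have hgz : reroute f x y u v z = f z := reroute_else hzx hzu hzy hzv
    have h1 : f z ≠ x := fun h => hzy (by rw [← hf.invol z, h, hfx])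
    have h2 : f z ≠ y := fun h => hzx (by rw [← hf.invol z, h, hfy])
    have h3 : f z ≠ u := fun h => hzv (by rw [← hf.invol z, h, hfu])
    have h4 : f z ≠ v := fun h => hzu (by rw [← hf.invol z, h, hfv])
    rw [hgz]
    exact ⟨hf.mem hz, by rw [reroute_else h1 h3 h2 h4, hf.invol], hf.adj hz⟩
  · intro z hz
    have hzx : z ≠ x := fun h => hz (h ▸ hx)
    have hzu : z ≠ u := fun h => hz (h ▸ hu)
    have hzy : z ≠ y := fun h => hz (h ▸ hyW)
    have hzv : z ≠ v := fun h => hz (h ▸ hvW)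
    rw [reroute_else hzx hzu hzy hzv, hf.2 z hz]

/-- augmenting surgery: match two new vertices `u v` by rerouting through a
matched pair `x y`. -/
theorem pmon_augment {H : SimpleGraph V} {W : Finset V} {f : V → V}
    (hf : PMon H W f) {u v x y : V}
    (hu : u ∉ W) (hv : v ∉ W) (huv : u ≠ v) (hx : x ∈ W) (hfx : f x = y)
    (hadj1 : H.Adj u x) (hadj2 : H.Adj v y) :
    PMon H (insert u (insert v W)) (reroute f u v x y) := by
  have hyW : y ∈ W := hfx ▸ hf.mem hx
  have hfy : f y = x := by rw [← hfx, hf.invol]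
  have hxy : x ≠ y := fun h => hf.ne hx (by rw [hfx, h])
  have hxu : x ≠ u := fun h => hu (h ▸ hx)
  have hxv : x ≠ v := fun h => hv (h ▸ hx)
  have hyu : y ≠ u := fun h => hu (h ▸ hyW)
  have hyv : y ≠ v := fun h => hv (h ▸ hyW)
  have hgu : reroute f u v x y u = x := by simp [reroute]
  have hgx : reroute f u v x y x = u := by simp [reroute, hxu]
  have hgv : reroute f u v x y v = y := by simp [reroute, huv.symm, hxv.symm]
  have hgy : reroute f u v x y y = v := by simp [reroute, hyu, hxy.symm, hyv]
  have hmem : ∀ z ∈ W, z ∈ insert u (insert v W) := fun z hz =>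
    mem_insert_of_mem (mem_insert_of_mem hz)
  have huu : u ∈ insert u (insert v W) := mem_insert_self u _
  have hvv : v ∈ insert u (insert v W) := mem_insert_of_mem (mem_insert_self v _)
  constructor
  · intro z hz
    rcases eq_or_ne z u with h | hzu
    · rw [h, hgu]; exact ⟨hmem x hx, by rw [hgx], hadj1⟩
    rcases eq_or_ne z x with h | hzx
    · rw [h, hgx]; exact ⟨huu, by rw [hgu], hadj1.symm⟩
    rcases eq_or_ne z v with h | hzv
    · rw [h, hgv]; exact ⟨hmem y hyW, by rw [hgy], hadj2⟩
    rcases eq_or_ne z y with h | hzy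
    · rw [h, hgy]; exact ⟨hvv, by rw [hgv], hadj2.symm⟩
    have hzW : z ∈ W := by
      rcases mem_insert.1 hz with h | h
      · exact absurd h hzu
      rcases mem_insert.1 h with h' | h'
      · exact absurd h' hzv
      · exact h'
    have hgz : reroute f u v x y z = f z := reroute_else hzu hzx hzv hzy
    have h1 : f z ≠ u := fun h => hu (h ▸ hf.mem hzW)
    have h2 : f z ≠ v := fun h => hv (h ▸ hf.mem hzW)
    have h3 : f z ≠ x := fun h => hzy (by rw [← hf.invol z, h, hfx])
    have h4 : f z ≠ y := fun h => hzx (by rw [← hf.invol z, h, hfy])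
    rw [hgz]
    exact ⟨hmem _ (hf.mem hzW), by rw [reroute_else h1 h3 h2 h4, hf.invol], hf.adj hzW⟩
  · intro z hz
    have hzu : z ≠ u := fun h => hz (h ▸ huu)
    have hzv : z ≠ v := fun h => hz (h ▸ hvv)
    have hzW : z ∉ W := fun h => hz (hmem z h)
    have hzx : z ≠ x := fun h => hzW (h ▸ hx)
    have hzy : z ≠ y := fun h => hzW (h ▸ hyW)
    rw [reroute_else hzu hzx hzv hzy, hf.2 z hzW]

/-- simple extension by one new edge. -/
theorem pmon_extend {H : SimpleGraph V} {W : Finset V} {f : V → V}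
    (hf : PMon H W f) {u w : V} (hu : u ∉ W) (hw : w ∉ W) (hadj : H.Adj u w) :
    PMon H (insert u (insert w W)) (reroute f u w w u) := by
  have huw : u ≠ w := hadj.ne
  have huu : u ∈ insert u (insert w W) := mem_insert_self u _
  have hww : w ∈ insert u (insert w W) := mem_insert_of_mem (mem_insert_self w _)
  have hgu : reroute f u w w u u = w := by simp [reroute]
  have hgw : reroute f u w w u w = u := by simp [reroute, huw.symm]
  constructor
  · intro z hz
    rcases eq_or_ne z u with h | hzu
    · rw [h, hgu]; exact ⟨hww, by rw [hgw], hadj⟩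
    rcases eq_or_ne z w with h | hzw
    · rw [h, hgw]; exact ⟨huu, by rw [hgu], hadj.symm⟩
    have hzW : z ∈ W := by
      rcases mem_insert.1 hz with h | h
      · exact absurd h hzu
      rcases mem_insert.1 h with h' | h'
      · exact absurd h' hzw
      · exact h'
    have hgz : reroute f u w w u z = f z := reroute_else hzu hzw hzw hzu
    have h1 : f z ≠ u := fun h => hu (h ▸ hf.mem hzW)
    have h2 : f z ≠ w := fun h => hw (h ▸ hf.mem hzW)
    rw [hgz]
    exact ⟨mem_insert_of_mem (mem_insert_of_mem (hf.mem hzW)),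
      by rw [reroute_else h1 h2 h2 h1, hf.invol], hf.adj hzW⟩
  · intro z hz
    have hzu : z ≠ u := fun h => hz (h ▸ huu)
    have hzw : z ≠ w := fun h => hz (h ▸ hww)
    have hzW : z ∉ W := fun h => hz (mem_insert_of_mem (mem_insert_of_mem h))
    rw [reroute_else hzu hzw hzw hzu, hf.2 z hzW]

end EDPM

-- appended after part1 content
namespace EDPM

open Finset

variable {V : Type*} [Fintype V] [DecidableEq V]

/-- Dirac-type existence of a perfect matching. -/
theorem pmon_exists (H : SimpleGraph V) (U : Finset V) (heven : Even U.card)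
    (hdeg : ∀ x ∈ U, U.card ≤ 2 * (U.filter (H.Adj x)).card) :
    ∃ f, PMon H U f := by
  suffices aux : ∀ k (W : Finset V) (f : V → V), W ⊆ U → PMon H W f →
      U.card = W.card + 2 * k → ∃ g, PMon H U g by
    obtain ⟨k, hk⟩ := heven
    refine aux k ∅ id (empty_subset _) ⟨by simp, fun x _ => rfl⟩ ?_
    simp [hk, two_mul]
  intro k
  induction k with
  | zero =>
    intro W f hWU hf hcard
    have hW : W = U := eq_of_subset_of_card_le hWU (by omega)
    exact ⟨f, hW ▸ hf⟩
  | succ k ih =>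
    intro W f hWU hf hcard
    have hsd : (U \ W).card = 2 * k + 2 := by rw [card_sdiff_of_subset hWU]; omega
    by_cases hA : ∃ a ∈ U \ W, ∃ b ∈ U \ W, H.Adj a b
    · obtain ⟨a, ha, b, hb, hab⟩ := hA
      have haU : a ∈ U := (mem_sdiff.1 ha).1
      have hbU : b ∈ U := (mem_sdiff.1 hb).1
      have haW : a ∉ W := (mem_sdiff.1 ha).2
      have hbW : b ∉ W := (mem_sdiff.1 hb).2
      have hsub : insert a (insert b W) ⊆ U := by
        intro z hz
        rcases mem_insert.1 hz with h | h
        · exact h ▸ haU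
        rcases mem_insert.1 h with h' | h'
        · exact h' ▸ hbU
        · exact hWU h'
      have hcard2 : (insert a (insert b W)).card = W.card + 2 := by
        rw [card_insert_of_notMem (by
          intro h; rcases mem_insert.1 h with h' | h'
          · exact hab.ne h'
          · exact haW h'), card_insert_of_notMem hbW]
      exact ih _ _ hsub (pmon_extend hf haW hbW hab) (by omega)
    · push_neg at hA
      have h2 : 1 < (U \ W).card := by omega
      obtain ⟨u, hu, v, hv, huv⟩ := one_lt_card.1 h2
      have huU : u ∈ U := (mem_sdiff.1 hu).1
      have huW : u ∉ W := (mem_sdiff.1 hu).2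
      have hvU : v ∈ U := (mem_sdiff.1 hv).1
      have hvW : v ∉ W := (mem_sdiff.1 hv).2
      have hAW : U.filter (H.Adj u) ⊆ W := by
        intro a ha'
        obtain ⟨haU, hadj⟩ := mem_filter.1 ha'
        by_contra haW
        exact hA u hu a (mem_sdiff.2 ⟨haU, haW⟩) hadj
      have hBWpre : U.filter (H.Adj v) ⊆ W := by
        intro a ha'
        obtain ⟨haU, hadj⟩ := mem_filter.1 ha'
        by_contra haW
        exact hA v hv a (mem_sdiff.2 ⟨haU, haW⟩) hadj
      have hBW : (U.filter (H.Adj v)).image f ⊆ W := by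
        intro b hb'
        obtain ⟨c, hc, rfl⟩ := mem_image.1 hb'
        exact hf.mem (hBWpre hc)
      have hcardB : ((U.filter (H.Adj v)).image f).card = (U.filter (H.Adj v)).card :=
        card_image_of_injective _ hf.injective
      have hAB : ((U.filter (H.Adj u)) ∩ ((U.filter (H.Adj v)).image f)).Nonempty := by
        have hsum := card_union_add_card_inter (U.filter (H.Adj u)) ((U.filter (H.Adj v)).image f)
        have hWle : ((U.filter (H.Adj u)) ∪ ((U.filter (H.Adj v)).image f)).card ≤ W.card :=
          card_le_card (union_subset hAW hBW)
        have hd1 := hdeg u huU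
        have hd2 := hdeg v hvU
        rw [← card_pos]
        omega
      obtain ⟨x, hx⟩ := hAB
      have hxA : x ∈ U.filter (H.Adj u) := (mem_inter.1 hx).1
      have hxB : x ∈ (U.filter (H.Adj v)).image f := (mem_inter.1 hx).2
      obtain ⟨c, hc, hcx⟩ := mem_image.1 hxB
      have hxW : x ∈ W := hBW hxB
      have hfx : f x = c := by rw [← hcx, hf.invol]
      have hadj1 : H.Adj u x := (mem_filter.1 hxA).2
      have hadj2 : H.Adj v c := (mem_filter.1 hc).2
      have hnew := pmon_augment hf huW hvW huv hxW hfx hadj1 hadj2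
      have hsub : insert u (insert v W) ⊆ U := by
        intro z hz
        rcases mem_insert.1 hz with h | h
        · exact h ▸ huU
        rcases mem_insert.1 h with h' | h'
        · exact h' ▸ hvU
        · exact hWU h'
      have hcard2 : (insert u (insert v W)).card = W.card + 2 := by
        rw [card_insert_of_notMem (by
          intro h; rcases mem_insert.1 h with h' | h'
          · exact huv h'
          · exact huW h'), card_insert_of_notMem hvW]
      exact ih _ _ hsub hnew (by omega)

/-- The finset of all perfect matchings of `H` on `U`. -/
noncomputable def pms (H : SimpleGraph V) (U : Finset V) : Finset (V → V) :=
  univ.filter (PMon H U)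

lemma mem_pms {H : SimpleGraph V} {U : Finset V} {f : V → V} :
    f ∈ pms H U ↔ PMon H U f := by simp [pms]

/-- switching count, single target vertex. -/
lemma switch_count_single (H : SimpleGraph V) (U : Finset V) (L : ℕ)
    (hdeg : ∀ z ∈ U, U.card + 2 * L + 2 ≤ 2 * (U.filter (H.Adj z)).card)
    (x y : V) (hx : x ∈ U) :
    ((pms H U).filter (fun f => f x = y)).card * (2 * L) ≤ (pms H U).card := by
  classical
  set P := (pms H U).filter (fun f => f x = y) with hP
  set A := (U.filter (H.Adj x)).erase y with hA
  set B := (U.filter (H.Adj y)).erase x with hB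
  have hAU : A ⊆ U := (erase_subset _ _).trans (filter_subset _ _)
  have hBU : B ⊆ U := (erase_subset _ _).trans (filter_subset _ _)
  have claim1 : ∀ f ∈ P, 2 * L ≤ (A.filter (fun u => f u ∈ B)).card := by
    intro f hfP
    obtain ⟨hfpm, hfxy⟩ := mem_filter.1 hfP
    have hf : PMon H U f := mem_pms.1 hfpm
    have hyU : y ∈ U := hfxy ▸ hf.mem hx
    have hxyadj : H.Adj x y := hfxy ▸ hf.adj hx
    have himg : (A.filter (fun u => f u ∈ B)).image f = (A.image f) ∩ B := by
      ext w
      constructor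
      · intro hw
        obtain ⟨z, hz, rfl⟩ := mem_image.1 hw
        obtain ⟨hzA, hzB⟩ := mem_filter.1 hz
        exact mem_inter.2 ⟨mem_image_of_mem f hzA, hzB⟩
      · intro hw
        obtain ⟨hw1, hw2⟩ := mem_inter.1 hw
        obtain ⟨z, hz, rfl⟩ := mem_image.1 hw1
        exact mem_image_of_mem f (mem_filter.2 ⟨hz, hw2⟩)
    have hcardf : (A.filter (fun u => f u ∈ B)).card = ((A.image f) ∩ B).card := by
      rw [← himg, card_image_of_injective _ hf.injective]
    have hAf : A.image f ⊆ U := by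
      intro w hw
      obtain ⟨z, hz, rfl⟩ := mem_image.1 hw
      exact hf.mem (hAU hz)
    have hUnion : ((A.image f) ∪ B).card ≤ U.card :=
      card_le_card (union_subset hAf hBU)
    have hsum := card_union_add_card_inter (A.image f) B
    have hcardAf : (A.image f).card = A.card := card_image_of_injective _ hf.injective
    have hcA : (U.filter (H.Adj x)).card ≤ A.card + 1 := by
      rw [hA]
      by_cases hmem : y ∈ U.filter (H.Adj x)
      · rw [card_erase_of_mem hmem]; omega
      · rw [erase_eq_of_notMem hmem]; omega
    have hcB : (U.filter (H.Adj y)).card ≤ B.card + 1 := by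
      rw [hB]
      by_cases hmem : x ∈ U.filter (H.Adj y)
      · rw [card_erase_of_mem hmem]; omega
      · rw [erase_eq_of_notMem hmem]; omega
    have hd1 := hdeg x hx
    have hd2 := hdeg y hyU
    omega
  set D := P.sigma (fun f => A.filter (fun u => f u ∈ B)) with hD
  have claim2 : D.card ≤ (pms H U).card := by
    apply card_le_card_of_injOn (fun p => reroute p.1 x y p.2 (p.1 p.2))
    · rintro ⟨f, u⟩ hp
      obtain ⟨hfP, hu⟩ := mem_sigma.1 hp
      obtain ⟨hfpm, hfxy⟩ := mem_filter.1 hfP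
      have hf : PMon H U f := mem_pms.1 hfpm
      obtain ⟨huA, hfuB⟩ := mem_filter.1 hu
      have hxu : H.Adj x u := (mem_filter.1 (mem_of_mem_erase huA)).2
      have hyv : H.Adj y (f u) := (mem_filter.1 (mem_of_mem_erase hfuB)).2
      exact mem_pms.2 (pmon_switch hf hx (hAU huA) hfxy rfl hxu.ne' (ne_of_mem_erase huA)
        (ne_of_mem_erase hfuB) hxu hyv)
    · rintro ⟨f₁, u₁⟩ hp₁ ⟨f₂, u₂⟩ hp₂ heq
      simp only at heq
      obtain ⟨hfP₁, hu₁⟩ := mem_sigma.1 hp₁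
      obtain ⟨hfP₂, hu₂⟩ := mem_sigma.1 hp₂
      obtain ⟨hfpm₁, hfxy₁⟩ := mem_filter.1 hfP₁
      obtain ⟨hfpm₂, hfxy₂⟩ := mem_filter.1 hfP₂
      have hf₁ : PMon H U f₁ := mem_pms.1 hfpm₁
      have hf₂ : PMon H U f₂ := mem_pms.1 hfpm₂
      obtain ⟨huA₁, hfuB₁⟩ := mem_filter.1 hu₁
      obtain ⟨huA₂, hfuB₂⟩ := mem_filter.1 hu₂
      simp only at hfxy₁ hfxy₂ huA₁ huA₂ hfuB₁ hfuB₂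
      have hxy : x ≠ y := fun h => hf₁.ne hx (hfxy₁.trans h.symm)
      have hgx : ∀ (f : V → V) (u : V), reroute f x y u (f u) x = u := by
        intro f u; simp [reroute]
      have hgy : ∀ (f : V → V) (u : V), u ≠ x → u ≠ y → reroute f x y u (f u) y = f u := by
        intro f u hux huy
        simp [reroute, hxy.symm, huy.symm]
      have hux₁ : u₁ ≠ x := ((mem_filter.1 (mem_of_mem_erase huA₁)).2).ne'
      have huy₁ : u₁ ≠ y := ne_of_mem_erase huA₁
      have hux₂ : u₂ ≠ x := ((mem_filter.1 (mem_of_mem_erase huA₂)).2).ne'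
      have huy₂ : u₂ ≠ y := ne_of_mem_erase huA₂
      have huu : u₁ = u₂ := by
        have h1 := hgx f₁ u₁
        have h2 := hgx f₂ u₂
        rw [← h1, ← h2, heq]
      have hvv : f₁ u₁ = f₂ u₂ := by
        have h1 := hgy f₁ u₁ hux₁ huy₁
        have h2 := hgy f₂ u₂ hux₂ huy₂
        rw [← h1, ← h2, heq]
      have hff : f₁ = f₂ := by
        funext z
        by_cases hzx : z = x
        · rw [hzx, hfxy₁, hfxy₂]
        by_cases hzy : z = y
        · have e1 : f₁ z = x := by rw [hzy, ← hfxy₁, hf₁.invol]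
          have e2 : f₂ z = x := by rw [hzy, ← hfxy₂, hf₂.invol]
          rw [e1, e2]
        by_cases hzu : z = u₁
        · rw [hzu, hvv, huu]
        by_cases hzv : z = f₁ u₁
        · have e1 : f₁ z = u₁ := by rw [hzv, hf₁.invol]
          have e2 : f₂ z = u₁ := by rw [hzv, hvv, hf₂.invol, huu]
          rw [e1, e2]
        · have hzu2 : z ≠ u₂ := huu ▸ hzu
          have hzv2 : z ≠ f₂ u₂ := hvv ▸ hzv
          have e1 := reroute_else (f := f₁) hzx hzu hzy hzv
          have e2 := reroute_else (f := f₂) hzx hzu2 hzy hzv2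
          rw [← e1, ← e2, heq]
      subst hff huu
      rfl
  have hcount : P.card * (2 * L) ≤ D.card := by
    rw [hD, card_sigma]
    calc P.card * (2 * L) = ∑ _f ∈ P, 2 * L := by rw [sum_const, smul_eq_mul]
    _ ≤ ∑ f ∈ P, (A.filter (fun u => f u ∈ B)).card := sum_le_sum claim1
  exact hcount.trans claim2

/-- switching count, summed over a target set. -/
lemma switch_count (H : SimpleGraph V) (U : Finset V) (L : ℕ)
    (hdeg : ∀ z ∈ U, U.card + 2 * L + 2 ≤ 2 * (U.filter (H.Adj z)).card)
    (x : V) (hx : x ∈ U) (S : Finset V) :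
    ((pms H U).filter (fun f => f x ∈ S)).card * (2 * L)
      ≤ S.card * (pms H U).card := by
  classical
  have hsub : (pms H U).filter (fun f => f x ∈ S)
      ⊆ S.biUnion (fun y => (pms H U).filter (fun f => f x = y)) := by
    intro f hf
    obtain ⟨hfpm, hfx⟩ := mem_filter.1 hf
    exact mem_biUnion.2 ⟨f x, hfx, mem_filter.2 ⟨hfpm, rfl⟩⟩
  calc ((pms H U).filter (fun f => f x ∈ S)).card * (2 * L)
      ≤ (S.biUnion (fun y => (pms H U).filter (fun f => f x = y))).card * (2 * L) :=
        Nat.mul_le_mul_right _ (card_le_card hsub)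
    _ ≤ (∑ y ∈ S, ((pms H U).filter (fun f => f x = y)).card) * (2 * L) :=
        Nat.mul_le_mul_right _ card_biUnion_le
    _ = ∑ y ∈ S, ((pms H U).filter (fun f => f x = y)).card * (2 * L) := by
        rw [sum_mul]
    _ ≤ ∑ _y ∈ S, (pms H U).card := sum_le_sum (fun y _ => switch_count_single H U L hdeg x y hx)
    _ = S.card * (pms H U).card := by rw [sum_const, smul_eq_mul]

end EDPM

namespace EDPM

open Finset

variable {n N : ℕ} (G : SimpleGraph (Fin n)) (U : Fin N → Finset (Fin n))

/-- The graph available at stage `j`: edges of `G` inside `U j` that are not used by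
any earlier matching. -/
def Hg (f : Fin N → Fin n → Fin n) (j : Fin N) : SimpleGraph (Fin n) where
  Adj a b := G.Adj a b ∧ a ∈ U j ∧ b ∈ U j ∧
    ∀ k : Fin N, (k : ℕ) < (j : ℕ) → ¬(a ∈ U k ∧ f k a = b) ∧ ¬(b ∈ U k ∧ f k b = a)
  symm := by
    constructor
    intro a b h
    exact ⟨h.1.symm, h.2.2.1, h.2.1, fun k hk => ⟨(h.2.2.2 k hk).2, (h.2.2.2 k hk).1⟩⟩
  loopless := ⟨fun a h => G.loopless.irrefl a h.1⟩

lemma Hg_adj_sub {f : Fin N → Fin n → Fin n} {j : Fin N} {a b : Fin n}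
    (h : (Hg G U f j).Adj a b) : G.Adj a b := h.1

lemma Hg_congr {f f' : Fin N → Fin n → Fin n} (j : Fin N)
    (h : ∀ k : Fin N, (k : ℕ) < (j : ℕ) → f' k = f k) : Hg G U f' j = Hg G U f j := by
  ext a b
  constructor
  · rintro ⟨h1, h2, h3, h4⟩
    exact ⟨h1, h2, h3, fun k hk => by rw [← h k hk]; exact h4 k hk⟩
  · rintro ⟨h1, h2, h3, h4⟩
    exact ⟨h1, h2, h3, fun k hk => by rw [h k hk]; exact h4 k hk⟩

/-- number of previously used edges at `x` going into `U i`. -/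
def lossF (f : Fin N → Fin n → Fin n) (i : Fin N) (x : Fin n) (t : ℕ) : ℕ :=
  (univ.filter (fun j : Fin N => (j : ℕ) < t ∧ j ≠ i ∧ x ∈ U j ∧ f j x ∈ U i)).card

lemma lossF_zero (f : Fin N → Fin n → Fin n) (i : Fin N) (x : Fin n) :
    lossF U f i x 0 = 0 := by
  simp [lossF]

/-- the first `t` stages are good. -/
def Good (f : Fin N → Fin n → Fin n) (t : ℕ) : Prop :=
  ∀ j : Fin N, (j : ℕ) < t → PMon (Hg G U f j) (U j) (f j)

/-- degree lower bound in the stage graph. -/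
lemma deg_lower (f : Fin N → Fin n → Fin n) (j : Fin N) (hGood : Good G U f (j : ℕ))
    (x : Fin n) (hxUj : x ∈ U j) :
    ((U j).filter (G.Adj x)).card
      ≤ ((U j).filter ((Hg G U f j).Adj x)).card + lossF U f j x (j : ℕ) := by
  classical
  set T := univ.filter (fun k : Fin N => (k : ℕ) < (j : ℕ) ∧ k ≠ j ∧ x ∈ U k ∧ f k x ∈ U j)
    with hT
  have hsub : (U j).filter (G.Adj x)
      ⊆ ((U j).filter ((Hg G U f j).Adj x)) ∪ T.image (fun k => f k x) := by
    intro y hy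
    obtain ⟨hyU, hyadj⟩ := mem_filter.1 hy
    by_cases hH : (Hg G U f j).Adj x y
    · exact mem_union_left _ (mem_filter.2 ⟨hyU, hH⟩)
    · apply mem_union_right
      have : ∃ k : Fin N, (k : ℕ) < (j : ℕ) ∧
          ((x ∈ U k ∧ f k x = y) ∨ (y ∈ U k ∧ f k y = x)) := by
        by_contra hcon
        push_neg at hcon
        exact hH ⟨hyadj, hxUj, hyU, fun k hk => by
          have h' := hcon k hk
          exact ⟨fun hx' => (h'.1 hx'.1) hx'.2, fun hy' => (h'.2 hy'.1) hy'.2⟩⟩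
      obtain ⟨k, hk, hcase⟩ := this
      have hkne : k ≠ j := fun h => by rw [h] at hk; omega
      have hkey : x ∈ U k ∧ f k x = y := by
        rcases hcase with h | h
        · exact h
        · have hpm := hGood k hk
          have hxUk : x ∈ U k := by
            rw [← h.2]; exact hpm.mem h.1
          refine ⟨hxUk, ?_⟩
          rw [← h.2, hpm.invol]
      refine mem_image.2 ⟨k, ?_, hkey.2⟩
      rw [hT]
      refine mem_filter.2 ⟨mem_univ _, hk, hkne, hkey.1, ?_⟩
      rw [hkey.2]; exact hyU
  calc ((U j).filter (G.Adj x)).card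
      ≤ (((U j).filter ((Hg G U f j).Adj x)) ∪ T.image (fun k => f k x)).card :=
        card_le_card hsub
    _ ≤ ((U j).filter ((Hg G U f j).Adj x)).card + (T.image (fun k => f k x)).card :=
        card_union_le _ _
    _ ≤ ((U j).filter ((Hg G U f j).Adj x)).card + T.card := by
        have := card_image_le (s := T) (f := fun k => f k x)
        omega
    _ = ((U j).filter ((Hg G U f j).Adj x)).card + lossF U f j x (j : ℕ) := rfl

/-- overlap weights. -/
noncomputable def qq (K : Fin N → ℕ) (i j : Fin N) : ℝ :=
  ((U i ∩ U j).card : ℝ) / (2 * K j)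

lemma qq_nonneg (K : Fin N → ℕ) (i j : Fin N) : 0 ≤ qq U K i j := by
  apply div_nonneg (by positivity) (by positivity)

def Jset (i : Fin N) (x : Fin n) (t : ℕ) : Finset (Fin N) :=
  univ.filter (fun j : Fin N => t ≤ (j : ℕ) ∧ x ∈ U j ∧ j ≠ i)

noncomputable def Wt (K : Fin N → ℕ) (i : Fin N) (x : Fin n) (t : ℕ) : ℝ :=
  ∏ j ∈ Jset U i x t, (1 + qq U K i j)

lemma one_le_Wt (K : Fin N → ℕ) (i : Fin N) (x : Fin n) (t : ℕ) : 1 ≤ Wt U K i x t := by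
  rw [Wt]
  calc (1:ℝ) = ∏ _j ∈ Jset U i x t, 1 := by rw [prod_const_one]
  _ ≤ _ := Finset.prod_le_prod (fun j _ => zero_le_one)
      (fun j _ => by have := qq_nonneg U K i j; linarith)

lemma Wt_nonneg (K : Fin N → ℕ) (i : Fin N) (x : Fin n) (t : ℕ) : 0 ≤ Wt U K i x t :=
  le_trans zero_le_one (one_le_Wt U K i x t)

/-- the potential. -/
noncomputable def Phi (K : Fin N → ℕ) (tb : Fin N → ℝ) (f : Fin N → Fin n → Fin n)
    (t : ℕ) : ℝ :=
  ∑ i : Fin N, ∑ x ∈ U i, (2 : ℝ) ^ (lossF U f i x t) * Wt U K i x t * tb i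

lemma term_nonneg (K : Fin N → ℕ) (tb : Fin N → ℝ) (htb : ∀ i, 0 ≤ tb i)
    (f : Fin N → Fin n → Fin n) (t : ℕ) (i : Fin N) (x : Fin n) :
    0 ≤ (2 : ℝ) ^ (lossF U f i x t) * Wt U K i x t * tb i := by
  have := Wt_nonneg U K i x t
  have := htb i
  positivity

lemma term_le_Phi (K : Fin N → ℕ) (tb : Fin N → ℝ) (htb : ∀ i, 0 ≤ tb i)
    (f : Fin N → Fin n → Fin n) (t : ℕ) (i : Fin N) {x : Fin n} (hx : x ∈ U i) :
    (2 : ℝ) ^ (lossF U f i x t) * Wt U K i x t * tb i ≤ Phi U K tb f t := by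
  calc (2 : ℝ) ^ (lossF U f i x t) * Wt U K i x t * tb i
      ≤ ∑ y ∈ U i, (2 : ℝ) ^ (lossF U f i y t) * Wt U K i y t * tb i :=
        single_le_sum (fun y _ => term_nonneg U K tb htb f t i y) hx
    _ ≤ Phi U K tb f t :=
        single_le_sum (f := fun i => ∑ y ∈ U i, (2 : ℝ) ^ (lossF U f i y t) * Wt U K i y t * tb i)
          (fun j _ => sum_nonneg (fun y _ => term_nonneg U K tb htb f t j y)) (mem_univ i)

end EDPM

namespace EDPM

open Finset

variable {n N : ℕ} (G : SimpleGraph (Fin n)) (U : Fin N → Finset (Fin n))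

lemma lossF_update (f : Fin N → Fin n → Fin n) (t : ℕ) (ht : t < N)
    (g : Fin n → Fin n) (i : Fin N) (x : Fin n) :
    lossF U (Function.update f ⟨t, ht⟩ g) i x (t + 1) =
      lossF U f i x t +
        (if (⟨t, ht⟩ : Fin N) ≠ i ∧ x ∈ U ⟨t, ht⟩ ∧ g x ∈ U i then 1 else 0) := by
  classical
  set j₀ : Fin N := ⟨t, ht⟩ with hj₀
  have hval : (j₀ : ℕ) = t := rfl
  have hupd_ne : ∀ j : Fin N, j ≠ j₀ → Function.update f j₀ g j = f j :=
    fun j hj => Function.update_of_ne hj g f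
  have hupd : Function.update f j₀ g j₀ = g := Function.update_self _ _ _
  by_cases hc : j₀ ≠ i ∧ x ∈ U j₀ ∧ g x ∈ U i
  · have hset : univ.filter (fun j : Fin N =>
        (j : ℕ) < t + 1 ∧ j ≠ i ∧ x ∈ U j ∧ Function.update f j₀ g j x ∈ U i)
        = insert j₀ (univ.filter
            (fun j : Fin N => (j : ℕ) < t ∧ j ≠ i ∧ x ∈ U j ∧ f j x ∈ U i)) := by
      ext j
      simp only [mem_insert, mem_filter, mem_univ, true_and]
      constructor
      · rintro ⟨h1, h2, h3, h4⟩
        by_cases hjj : j = j₀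
        · exact Or.inl hjj
        · have hne : (j : ℕ) ≠ t := fun h => hjj (Fin.ext (by rw [h, hval]))
          refine Or.inr ⟨by omega, h2, h3, by rwa [hupd_ne j hjj] at h4⟩
      · rintro (hjj | ⟨h1, h2, h3, h4⟩)
        · subst hjj
          exact ⟨by omega, hc.1, hc.2.1, by rw [hupd]; exact hc.2.2⟩
        · have hjj : j ≠ j₀ := fun h => by rw [h, hval] at h1; omega
          exact ⟨by omega, h2, h3, by rw [hupd_ne j hjj]; exact h4⟩
    rw [lossF, lossF, hset, card_insert_of_notMem (by
        simp only [mem_filter, mem_univ, true_and]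
        rintro ⟨h1, -⟩
        omega), if_pos hc]
  · have hset : univ.filter (fun j : Fin N =>
        (j : ℕ) < t + 1 ∧ j ≠ i ∧ x ∈ U j ∧ Function.update f j₀ g j x ∈ U i)
        = univ.filter (fun j : Fin N => (j : ℕ) < t ∧ j ≠ i ∧ x ∈ U j ∧ f j x ∈ U i) := by
      ext j
      simp only [mem_filter, mem_univ, true_and]
      constructor
      · rintro ⟨h1, h2, h3, h4⟩
        by_cases hjj : j = j₀
        · exfalso
          subst hjj
          rw [hupd] at h4
          exact hc ⟨h2, h3, h4⟩
        · have hne : (j : ℕ) ≠ t := fun h => hjj (Fin.ext (by rw [h, hval]))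
          exact ⟨by omega, h2, h3, by rwa [hupd_ne j hjj] at h4⟩
      · rintro ⟨h1, h2, h3, h4⟩
        have hjj : j ≠ j₀ := fun h => by rw [h, hval] at h1; omega
        exact ⟨by omega, h2, h3, by rw [hupd_ne j hjj]; exact h4⟩
    rw [lossF, lossF, hset, if_neg hc]
    omega

lemma Jset_succ (i : Fin N) (x : Fin n) (t : ℕ) (ht : t < N)
    (hx : x ∈ U ⟨t, ht⟩) (hne : (⟨t, ht⟩ : Fin N) ≠ i) :
    Jset U i x t = insert ⟨t, ht⟩ (Jset U i x (t + 1)) ∧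
      (⟨t, ht⟩ : Fin N) ∉ Jset U i x (t + 1) := by
  classical
  set j₀ : Fin N := ⟨t, ht⟩ with hj₀
  have hval : (j₀ : ℕ) = t := rfl
  constructor
  · ext j
    simp only [Jset, mem_insert, mem_filter, mem_univ, true_and]
    constructor
    · rintro ⟨h1, h2, h3⟩
      by_cases hjj : j = j₀
      · exact Or.inl hjj
      · have hne' : (j : ℕ) ≠ t := fun h => hjj (Fin.ext (by rw [h, hval]))
        exact Or.inr ⟨by omega, h2, h3⟩
    · rintro (hjj | ⟨h1, h2, h3⟩)
      · subst hjj
        exact ⟨by omega, hx, hne⟩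
      · exact ⟨by omega, h2, h3⟩
  · simp only [Jset, mem_filter, mem_univ, true_and]
    rintro ⟨h1, -⟩
    omega

lemma Jset_succ_eq (i : Fin N) (x : Fin n) (t : ℕ) (ht : t < N)
    (h : ¬(x ∈ U ⟨t, ht⟩ ∧ (⟨t, ht⟩ : Fin N) ≠ i)) :
    Jset U i x t = Jset U i x (t + 1) := by
  classical
  set j₀ : Fin N := ⟨t, ht⟩ with hj₀
  have hval : (j₀ : ℕ) = t := rfl
  ext j
  simp only [Jset, mem_filter, mem_univ, true_and]
  constructor
  · rintro ⟨h1, h2, h3⟩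
    by_cases hjj : j = j₀
    · exact absurd ⟨hjj ▸ h2, hjj ▸ h3⟩ h
    · have hne' : (j : ℕ) ≠ t := fun hh => hjj (Fin.ext (by rw [hh, hval]))
      exact ⟨by omega, h2, h3⟩
  · rintro ⟨h1, h2, h3⟩
    exact ⟨by omega, h2, h3⟩

/-- The key stage step: there is a perfect matching of the available graph at stage `t`
that does not increase the potential. -/
lemma stage_step (K : Fin N → ℕ) (hK : ∀ j, 0 < K j) (tb : Fin N → ℝ) (htb : ∀ i, 0 ≤ tb i)
    (f : Fin N → Fin n → Fin n) (t : ℕ) (ht : t < N)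
    (heven : Even (U ⟨t, ht⟩).card)
    (hdeg : ∀ z ∈ U ⟨t, ht⟩, (U ⟨t, ht⟩).card + 2 * K ⟨t, ht⟩ + 2
        ≤ 2 * ((U ⟨t, ht⟩).filter ((Hg G U f ⟨t, ht⟩).Adj z)).card) :
    ∃ g, PMon (Hg G U f ⟨t, ht⟩) (U ⟨t, ht⟩) g ∧
      Phi U K tb (Function.update f ⟨t, ht⟩ g) (t + 1) ≤ Phi U K tb f t := by
  classical
  set j₀ : Fin N := ⟨t, ht⟩ with hj₀
  set H : SimpleGraph (Fin n) := Hg G U f j₀ with hH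
  set P : Finset (Fin n → Fin n) := pms H (U j₀) with hPdef
  have hPne : P.Nonempty := by
    obtain ⟨g, hg⟩ := pmon_exists H (U j₀) heven (fun z hz => by have := hdeg z hz; omega)
    exact ⟨g, mem_pms.2 hg⟩
  -- the key averaging inequality
  have claim : ∀ i : Fin N, ∀ x ∈ U i,
      ∑ g ∈ P, (2 : ℝ) ^ (lossF U (Function.update f j₀ g) i x (t + 1))
          * Wt U K i x (t + 1) * tb i
        ≤ (P.card : ℝ) * ((2 : ℝ) ^ (lossF U f i x t) * Wt U K i x t * tb i) := by
    intro i x hxi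
    by_cases hcase : x ∈ U j₀ ∧ j₀ ≠ i
    · obtain ⟨hxj₀, hnei⟩ := hcase
      obtain ⟨hJins, hJnot⟩ := Jset_succ U i x t ht hxj₀ hnei
      have hWt : Wt U K i x t = (1 + qq U K i j₀) * Wt U K i x (t + 1) := by
        rw [Wt, Wt, hJins, prod_insert hJnot]
      -- count matchings sending x into U i
      set c₁ : ℕ := (P.filter (fun g => g x ∈ U i)).card with hc₁
      have hfiltereq : P.filter (fun g => g x ∈ U i)
          = P.filter (fun g => g x ∈ U i ∩ U j₀) := by
        apply filter_congr
        intro g hg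
        have hgx : g x ∈ U j₀ := (mem_pms.1 hg).mem hxj₀
        simp [mem_inter, hgx]
      have hswitch := switch_count H (U j₀) (K j₀) hdeg x hxj₀ (U i ∩ U j₀)
      rw [← hfiltereq] at hswitch
      have hc₁q : (c₁ : ℝ) ≤ qq U K i j₀ * P.card := by
        have h2K : (0 : ℝ) < 2 * K j₀ := by
          have := hK j₀
          positivity
        rw [qq, div_mul_eq_mul_div, le_div_iff₀ h2K]
        calc (c₁ : ℝ) * (2 * K j₀) = ((c₁ * (2 * K j₀) : ℕ) : ℝ) := by push_cast; ring
          _ ≤ (((U i ∩ U j₀).card * P.card : ℕ) : ℝ) := by exact_mod_cast Nat.cast_le.2 hswitch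
          _ = ((U i ∩ U j₀).card : ℝ) * P.card := by push_cast; ring
      -- split the sum according to whether g x ∈ U i
      have hsum : ∑ g ∈ P, (2 : ℝ) ^ (lossF U (Function.update f j₀ g) i x (t + 1))
            * Wt U K i x (t + 1) * tb i
          = (2 : ℝ) ^ (lossF U f i x t) * Wt U K i x (t + 1) * tb i
              * ((P.card : ℝ) + c₁) := by
        have hterm : ∀ g ∈ P,
            (2 : ℝ) ^ (lossF U (Function.update f j₀ g) i x (t + 1))
                * Wt U K i x (t + 1) * tb i
              = (2 : ℝ) ^ (lossF U f i x t) * Wt U K i x (t + 1) * tb i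
                  * (if g x ∈ U i then 2 else 1) := by
          intro g hg
          rw [lossF_update U f t ht g i x]
          by_cases hgx : g x ∈ U i
          · rw [if_pos ⟨hnei, hxj₀, hgx⟩, if_pos hgx, pow_succ]
            ring
          · rw [if_neg (by rintro ⟨-, -, hh⟩; exact hgx hh), if_neg hgx]
            ring
        rw [sum_congr rfl hterm, ← mul_sum]
        congr 1
        rw [sum_ite, sum_const, sum_const, nsmul_eq_mul, nsmul_eq_mul, ← hc₁]
        have hcards : c₁ + (P.filter (fun g => ¬(g x ∈ U i))).card = P.card := by
          rw [hc₁]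
          exact card_filter_add_card_filter_not (fun g : Fin n → Fin n => g x ∈ U i)
        have hc₂ : ((P.filter (fun g => ¬(g x ∈ U i))).card : ℝ) = (P.card : ℝ) - c₁ := by
          rw [← hcards]
          push_cast
          ring
        rw [hc₂]
        ring
      rw [hsum, hWt]
      have hWt1 : (0:ℝ) ≤ Wt U K i x (t+1) := Wt_nonneg U K i x (t+1)
      have htb1 : (0:ℝ) ≤ tb i := htb i
      have hpow : (0:ℝ) ≤ (2 : ℝ) ^ (lossF U f i x t) := by positivity
      calc (2 : ℝ) ^ (lossF U f i x t) * Wt U K i x (t + 1) * tb i * ((P.card : ℝ) + c₁)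
          ≤ (2 : ℝ) ^ (lossF U f i x t) * Wt U K i x (t + 1) * tb i
              * ((P.card : ℝ) + qq U K i j₀ * P.card) := by
            apply mul_le_mul_of_nonneg_left _ (by positivity)
            linarith
        _ = (P.card : ℝ) * ((2 : ℝ) ^ (lossF U f i x t)
              * ((1 + qq U K i j₀) * Wt U K i x (t + 1)) * tb i) := by ring
    · -- nothing changes for this pair
      have hJeq : Jset U i x t = Jset U i x (t + 1) :=
        Jset_succ_eq U i x t ht (fun hh => hcase ⟨hh.1, hh.2⟩)
      have hWt : Wt U K i x t = Wt U K i x (t + 1) := by rw [Wt, Wt, hJeq]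
      have hloss : ∀ g, lossF U (Function.update f j₀ g) i x (t + 1) = lossF U f i x t := by
        intro g
        rw [lossF_update U f t ht g i x, if_neg (by
          rintro ⟨h1, h2, -⟩
          exact hcase ⟨h2, h1⟩)]
        omega
      have : ∑ g ∈ P, (2 : ℝ) ^ (lossF U (Function.update f j₀ g) i x (t + 1))
            * Wt U K i x (t + 1) * tb i
          = (P.card : ℝ) * ((2 : ℝ) ^ (lossF U f i x t) * Wt U K i x (t + 1) * tb i) := by
        rw [sum_congr rfl (fun g _ => by rw [hloss g]), sum_const, nsmul_eq_mul]
      rw [this, hWt]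
  -- sum the claim over all pairs
  have key : ∑ g ∈ P, Phi U K tb (Function.update f j₀ g) (t + 1)
      ≤ ∑ _g ∈ P, Phi U K tb f t := by
    have hswap : ∑ g ∈ P, Phi U K tb (Function.update f j₀ g) (t + 1)
        = ∑ i : Fin N, ∑ x ∈ U i, ∑ g ∈ P,
            (2 : ℝ) ^ (lossF U (Function.update f j₀ g) i x (t + 1))
              * Wt U K i x (t + 1) * tb i := by
      simp only [Phi]
      rw [Finset.sum_comm]
      exact sum_congr rfl (fun i _ => Finset.sum_comm)
    rw [hswap, sum_const, nsmul_eq_mul]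
    calc ∑ i : Fin N, ∑ x ∈ U i, ∑ g ∈ P,
            (2 : ℝ) ^ (lossF U (Function.update f j₀ g) i x (t + 1))
              * Wt U K i x (t + 1) * tb i
        ≤ ∑ i : Fin N, ∑ x ∈ U i,
            (P.card : ℝ) * ((2 : ℝ) ^ (lossF U f i x t) * Wt U K i x t * tb i) :=
          sum_le_sum (fun i _ => sum_le_sum (fun x hx => claim i x hx))
      _ = (P.card : ℝ) * Phi U K tb f t := by
          rw [Phi, mul_sum]
          apply sum_congr rfl
          intro i _
          rw [mul_sum]
  obtain ⟨g, hgP, hgle⟩ := Finset.exists_le_of_sum_le hPne key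
  exact ⟨g, mem_pms.1 hgP, hgle⟩

end EDPM

set_option maxHeartbeats 1000000 in
open Finset EDPM in
/-- For every `ρ ∈ (0,1]` there is `n₀` such that for all `n ≥ n₀` and all `N`: if `G` is
a graph on `n` vertices and `U 0, …, U (N-1)` are vertex sets such that
(i) `|U i|` is even and `δ(G[U i]) ≥ (1/2 + 4ρ^{1/6})|U i|`, (ii) `|U i| ≥ ρ^{4/3} n`,
(iii) `|U i ∩ U j| ≤ ρ² n` for `i < j`, and (iv) every vertex lies in at most `ρn` of the
sets `U i`, then there are perfect matchings `M i` of `G[U i]` which are pairwise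
edge-disjoint. -/
theorem edge_disjoint_perfect_matchings (ρ : ℝ) (hρ0 : 0 < ρ) (hρ1 : ρ ≤ 1) :
    ∃ n₀ : ℕ, ∀ n : ℕ, n₀ ≤ n → ∀ N : ℕ,
      ∀ G : SimpleGraph (Fin n), ∀ U : Fin N → Finset (Fin n),
        (∀ i, Even (U i).card ∧ ∀ x ∈ U i,
          (1 / 2 + 4 * ρ ^ ((1 : ℝ) / 6)) * (U i).card ≤
            ((G.neighborSet x ∩ ↑(U i)).ncard : ℝ)) →
        (∀ i, ρ ^ ((4 : ℝ) / 3) * n ≤ ((U i).card : ℝ)) →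
        (∀ i j : Fin N, i < j → ((U i ∩ U j).card : ℝ) ≤ ρ ^ 2 * n) →
        (∀ u : Fin n,
          ((Finset.univ.filter (fun i : Fin N => u ∈ U i)).card : ℝ) ≤ ρ * n) →
        ∃ M : Fin N → Set (Sym2 (Fin n)),
          (∀ i, IsPerfectMatchingOn G ↑(U i) (M i)) ∧
          ∀ i j : Fin N, i ≠ j → Disjoint (M i) (M j) := by
  classical
  refine ⟨⌈(65 : ℝ) * ρ ^ (-(3 : ℝ))⌉₊, ?_⟩
  intro n hn N G U h1 h2 h3 h4
  set r16 := ρ ^ ((1 : ℝ) / 6) with hr16def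
  set r43 := ρ ^ ((4 : ℝ) / 3) with hr43def
  have hr32def : True := trivial
  set r32 := ρ ^ ((3 : ℝ) / 2) with hr32def'
  set r12 := ρ ^ ((1 : ℝ) / 2) with hr12def
  have hr16 : 0 < r16 := Real.rpow_pos_of_pos hρ0 _
  have hr43 : 0 < r43 := Real.rpow_pos_of_pos hρ0 _
  have hr32 : 0 < r32 := Real.rpow_pos_of_pos hρ0 _
  have hr12 : 0 < r12 := Real.rpow_pos_of_pos hρ0 _
  have hmul1 : r16 * r43 = r32 := by
    rw [hr16def, hr43def, hr32def', ← Real.rpow_add hρ0]; norm_num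
  have hmul2 : ρ * r12 = r32 := by
    rw [hr12def, hr32def']
    nth_rewrite 1 [← Real.rpow_one ρ]
    rw [← Real.rpow_add hρ0]; norm_num
  have hmul3 : ρ ^ 2 = r32 * r12 := by
    rw [hr32def', hr12def, ← Real.rpow_add hρ0]
    norm_num
  have hmul4 : ρ ^ ((3 : ℝ)) * ρ ^ (-(3 : ℝ)) = 1 := by
    rw [← Real.rpow_add hρ0]; norm_num
  have hmul5 : r32 * r32 = ρ ^ ((3 : ℝ)) := by
    rw [hr32def', ← Real.rpow_add hρ0]; norm_num
  have hn' : (65 : ℝ) * ρ ^ (-(3 : ℝ)) ≤ (n : ℝ) := by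
    have := Nat.ceil_le.1 hn
    exact_mod_cast this
  have hρm3 : (1 : ℝ) ≤ ρ ^ (-(3 : ℝ)) :=
    Real.one_le_rpow_of_pos_of_le_one_of_nonpos hρ0 hρ1 (by norm_num)
  have hn65 : (65 : ℝ) ≤ (n : ℝ) := le_trans (by nlinarith) hn'
  have hn0 : (0 : ℝ) < (n : ℝ) := by linarith
  have hρ3pos : 0 < ρ ^ ((3 : ℝ)) := Real.rpow_pos_of_pos hρ0 _
  have hρ3n : (65 : ℝ) ≤ ρ ^ ((3 : ℝ)) * n := by nlinarith
  set s := r32 * n with hs_def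
  have hs0 : 0 < s := by positivity
  have hs2 : s * s = (ρ ^ ((3 : ℝ)) * n) * n := by
    calc s * s = (r32 * r32) * (n * n) := by ring
      _ = (ρ ^ ((3 : ℝ)) * n) * n := by rw [hmul5]; ring
  have hs65 : (65 : ℝ) ≤ s := by nlinarith
  set K : Fin N → ℕ := fun i => ⌈r16 * ((U i).card : ℝ)⌉₊ with hK_def
  have hsm : ∀ i : Fin N, s ≤ r16 * ((U i).card : ℝ) := by
    intro i
    calc s = r16 * (r43 * n) := by rw [hs_def, ← mul_assoc, hmul1]
      _ ≤ r16 * ((U i).card : ℝ) := by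
          apply mul_le_mul_of_nonneg_left (h2 i) hr16.le
  have hKlb : ∀ i : Fin N, s ≤ (K i : ℝ) := fun i => le_trans (hsm i) (Nat.le_ceil _)
  have hK0 : ∀ i : Fin N, 0 < K i := by
    intro i
    have : (0 : ℝ) < (K i : ℝ) := lt_of_lt_of_le hs0 (hKlb i)
    exact_mod_cast this
  have hKub : ∀ i : Fin N, (K i : ℝ) ≤ r16 * ((U i).card : ℝ) + 1 := fun i =>
    (Nat.ceil_lt_add_one (by positivity)).le
  set tb : Fin N → ℝ := fun i =>
    Real.exp (-(2 * (r16 * ((U i).card : ℝ))) * Real.log 2) with htb_def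
  have htb : ∀ i, 0 ≤ tb i := fun i => (Real.exp_pos _).le
  -- overlap bounds
  have hinter : ∀ i j : Fin N, i ≠ j → ((U i ∩ U j).card : ℝ) ≤ ρ ^ 2 * n := by
    intro i j hij
    rcases lt_or_gt_of_ne hij with h | h
    · exact h3 i j h
    · rw [inter_comm]
      exact h3 j i h
  have hsne : s ≠ 0 := ne_of_gt hs0
  have hq : ∀ i j : Fin N, j ≠ i → qq U K i j ≤ r12 / 2 := by
    intro i j hji
    have h2K : (0 : ℝ) < 2 * (K j : ℝ) := by
      have := hK0 j
      positivity
    have h2s : (0 : ℝ) < 2 * s := by linarith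
    have hden : 2 * s ≤ 2 * (K j : ℝ) := by have := hKlb j; linarith
    have hnum : ((U i ∩ U j).card : ℝ) ≤ ρ ^ 2 * n := hinter i j (fun h => hji h.symm)
    have hstep : qq U K i j ≤ (ρ ^ 2 * n) / (2 * s) := by
      rw [qq]
      apply div_le_div₀ (by positivity) hnum h2s hden
    have heq : (ρ ^ 2 * n) / (2 * s) = r12 / 2 := by
      rw [hmul3, hs_def]
      field_simp
    rw [heq] at hstep
    exact hstep
  -- column sums of q
  have hJq : ∀ (i : Fin N) (x : Fin n), ∑ j ∈ Jset U i x 0, qq U K i j ≤ s / 2 := by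
    intro i x
    have hsub : Jset U i x 0 ⊆ univ.filter (fun j : Fin N => x ∈ U j) := by
      intro j hj
      simp only [Jset, mem_filter, mem_univ, true_and] at hj ⊢
      exact hj.2.1
    have hcard : ((Jset U i x 0).card : ℝ) ≤ ρ * n :=
      le_trans (by exact_mod_cast card_le_card hsub) (h4 x)
    calc ∑ j ∈ Jset U i x 0, qq U K i j
        ≤ ∑ j ∈ Jset U i x 0, r12 / 2 := by
          apply sum_le_sum
          intro j hj
          simp only [Jset, mem_filter, mem_univ, true_and] at hj
          exact hq i j hj.2.2
      _ = ((Jset U i x 0).card : ℝ) * (r12 / 2) := by rw [sum_const, nsmul_eq_mul]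
      _ ≤ (ρ * n) * (r12 / 2) := by
          apply mul_le_mul_of_nonneg_right hcard (by positivity)
      _ = s / 2 := by rw [hs_def, ← hmul2]; ring
  have hJq' : ∀ (i : Fin N) (x : Fin n) (t : ℕ),
      ∑ j ∈ Jset U i x t, qq U K i j ≤ s / 2 := by
    intro i x t
    have hsub : Jset U i x t ⊆ Jset U i x 0 := by
      intro j hj
      simp only [Jset, mem_filter, mem_univ, true_and] at hj ⊢
      exact ⟨Nat.zero_le _, hj.2.1, hj.2.2⟩
    calc ∑ j ∈ Jset U i x t, qq U K i j
        ≤ ∑ j ∈ Jset U i x 0, qq U K i j :=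
          sum_le_sum_of_subset_of_nonneg hsub (fun j _ _ => qq_nonneg U K i j)
      _ ≤ s / 2 := hJq i x
  have hWt0 : ∀ (i : Fin N) (x : Fin n) (t : ℕ), Wt U K i x t ≤ Real.exp (s / 2) := by
    intro i x t
    calc Wt U K i x t ≤ ∏ j ∈ Jset U i x t, Real.exp (qq U K i j) := by
          apply prod_le_prod
          · intro j _; have := qq_nonneg U K i j; linarith
          · intro j _; have := Real.add_one_le_exp (qq U K i j); linarith
      _ = Real.exp (∑ j ∈ Jset U i x t, qq U K i j) := (Real.exp_sum _ _).symm
      _ ≤ Real.exp (s / 2) := Real.exp_le_exp.2 (hJq' i x t)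
  have hlog2 : (0.6931 : ℝ) < Real.log 2 := by
    have := Real.log_two_gt_d9
    linarith
  have htb_le : ∀ i : Fin N, tb i ≤ Real.exp (-(2 * s) * Real.log 2) := by
    intro i
    simp only [htb_def]
    apply Real.exp_le_exp.2
    have h := hsm i
    have hl2 : (0 : ℝ) ≤ Real.log 2 := by linarith
    have hneg : -(2 * (r16 * ((U i).card : ℝ))) ≤ -(2 * s) := by linarith
    exact mul_le_mul_of_nonneg_right hneg hl2
  have hterm0 : ∀ (i : Fin N) (x : Fin n),
      Wt U K i x 0 * tb i ≤ Real.exp (s / 2 + -(2 * s) * Real.log 2) := by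
    intro i x
    rw [Real.exp_add]
    exact mul_le_mul (hWt0 i x 0) (htb_le i) (htb i) (Real.exp_pos _).le
  -- total size of the sets
  have hsumcard : ∑ i : Fin N, ((U i).card : ℝ) ≤ (n : ℝ) * (ρ * n) := by
    have hnat : ∑ i : Fin N, (U i).card
        = ∑ x : Fin n, (univ.filter (fun i : Fin N => x ∈ U i)).card := by
      calc ∑ i : Fin N, (U i).card
          = ∑ i : Fin N, ∑ x : Fin n, (if x ∈ U i then 1 else 0) := by
            apply sum_congr rfl
            intro i _
            rw [← card_filter]
            congr 1
            ext x
            simp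
        _ = ∑ x : Fin n, ∑ i : Fin N, (if x ∈ U i then 1 else 0) := sum_comm
        _ = ∑ x : Fin n, (univ.filter (fun i : Fin N => x ∈ U i)).card := by
            apply sum_congr rfl
            intro x _
            rw [card_filter]
    calc ∑ i : Fin N, ((U i).card : ℝ)
        = ((∑ i : Fin N, (U i).card : ℕ) : ℝ) := by push_cast; ring
      _ = ((∑ x : Fin n, (univ.filter (fun i : Fin N => x ∈ U i)).card : ℕ) : ℝ) := by
          rw [hnat]
      _ = ∑ x : Fin n, ((univ.filter (fun i : Fin N => x ∈ U i)).card : ℝ) := by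
          push_cast; ring
      _ ≤ ∑ _x : Fin n, (ρ * n) := sum_le_sum (fun x _ => h4 x)
      _ = (n : ℝ) * (ρ * n) := by rw [sum_const, nsmul_eq_mul, card_univ, Fintype.card_fin]
  -- the potential at time 0 is < 1
  have hsqrt0 : (0 : ℝ) < Real.sqrt n := Real.sqrt_pos.2 hn0
  have hlogn : Real.log n ≤ 2 * Real.sqrt n := by
    have ha : Real.log (Real.sqrt n) ≤ Real.sqrt n - 1 :=
      Real.log_le_sub_one_of_pos hsqrt0
    have hb : Real.log (Real.sqrt n) = Real.log n / 2 := Real.log_sqrt hn0.le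
    linarith
  have h5s : 5 * Real.sqrt n ≤ s := by
    have hss : (r32 * Real.sqrt n) ^ 2 = ρ ^ ((3 : ℝ)) * n := by
      rw [mul_pow, Real.sq_sqrt hn0.le, ← hmul5]
      ring
    have h5 : 5 ≤ r32 * Real.sqrt n := by nlinarith [mul_pos hr32 hsqrt0]
    calc 5 * Real.sqrt n ≤ (r32 * Real.sqrt n) * Real.sqrt n :=
          mul_le_mul_of_nonneg_right h5 hsqrt0.le
      _ = r32 * n := by rw [mul_assoc, Real.mul_self_sqrt hn0.le]
      _ = s := hs_def.symm
  have hexp_neg : 2 * Real.log n + (s / 2 + -(2 * s) * Real.log 2) < 0 := by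
    nlinarith
  have hn2exp : (n : ℝ) * n = Real.exp (2 * Real.log n) := by
    rw [two_mul, Real.exp_add, Real.exp_log hn0]
  have hPhi0lt : ∀ f : Fin N → Fin n → Fin n, Phi U K tb f 0 < 1 := by
    intro f
    have hstep1 : Phi U K tb f 0 = ∑ i : Fin N, ∑ x ∈ U i, Wt U K i x 0 * tb i := by
      rw [Phi]
      apply sum_congr rfl
      intro i _
      apply sum_congr rfl
      intro x _
      rw [lossF_zero, pow_zero, one_mul]
    have hE0 : (0:ℝ) ≤ Real.exp (s / 2 + -(2 * s) * Real.log 2) := (Real.exp_pos _).le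
    calc Phi U K tb f 0
        = ∑ i : Fin N, ∑ x ∈ U i, Wt U K i x 0 * tb i := hstep1
      _ ≤ ∑ i : Fin N, ∑ _x ∈ U i, Real.exp (s / 2 + -(2 * s) * Real.log 2) :=
          sum_le_sum (fun i _ => sum_le_sum (fun x _ => hterm0 i x))
      _ = ∑ i : Fin N, ((U i).card : ℝ) * Real.exp (s / 2 + -(2 * s) * Real.log 2) := by
          apply sum_congr rfl
          intro i _
          rw [sum_const, nsmul_eq_mul]
      _ = (∑ i : Fin N, ((U i).card : ℝ)) * Real.exp (s / 2 + -(2 * s) * Real.log 2) := by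
          rw [sum_mul]
      _ ≤ ((n : ℝ) * (ρ * n)) * Real.exp (s / 2 + -(2 * s) * Real.log 2) :=
          mul_le_mul_of_nonneg_right hsumcard hE0
      _ ≤ ((n : ℝ) * n) * Real.exp (s / 2 + -(2 * s) * Real.log 2) := by
          apply mul_le_mul_of_nonneg_right _ hE0
          nlinarith
      _ = Real.exp (2 * Real.log n + (s / 2 + -(2 * s) * Real.log 2)) := by
          rw [hn2exp, ← Real.exp_add]
      _ < 1 := by
          rw [← Real.exp_zero]
          exact Real.exp_lt_exp.2 hexp_neg
  -- casting the degree hypothesis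
  have hcast : ∀ (i : Fin N) (z : Fin n),
      (G.neighborSet z ∩ ↑(U i)).ncard = ((U i).filter (G.Adj z)).card := by
    intro i z
    have hset : G.neighborSet z ∩ ↑(U i) = ↑((U i).filter (G.Adj z)) := by
      ext y
      simp only [Set.mem_inter_iff, SimpleGraph.mem_neighborSet, Finset.coe_filter,
        Set.mem_setOf_eq, Finset.mem_coe]
      tauto
    rw [hset, Set.ncard_coe_finset]
  -- the degree condition at each stage
  have hdegstage : ∀ (t : ℕ) (htN : t < N) (f : Fin N → Fin n → Fin n),
      Good G U f t → Phi U K tb f t < 1 →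
      ∀ z ∈ U ⟨t, htN⟩, (U ⟨t, htN⟩).card + 2 * K ⟨t, htN⟩ + 2
        ≤ 2 * ((U ⟨t, htN⟩).filter ((Hg G U f ⟨t, htN⟩).Adj z)).card := by
    intro t htN f hGood hPhi z hz
    set j₀ : Fin N := ⟨t, htN⟩ with hj₀
    set m : ℝ := ((U j₀).card : ℝ) with hm_def
    have hterm := term_le_Phi U K tb htb f t j₀ hz
    have hW1 := one_le_Wt U K j₀ z t
    have htbval : tb j₀ = Real.exp (-(2 * (r16 * m)) * Real.log 2) := rfl
    have hloss : (lossF U f j₀ z t : ℝ) ≤ 2 * (r16 * m) := by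
      by_contra hcon
      push_neg at hcon
      have hpow : ((2 : ℝ) ^ (lossF U f j₀ z t))
          = Real.exp ((lossF U f j₀ z t : ℝ) * Real.log 2) := by
        rw [← Real.rpow_natCast 2 (lossF U f j₀ z t), Real.rpow_def_of_pos two_pos]
        ring_nf
      have hgt : (1 : ℝ) < (2 : ℝ) ^ (lossF U f j₀ z t) * tb j₀ := by
        rw [hpow, htbval, ← Real.exp_add, ← Real.exp_zero]
        apply Real.exp_lt_exp.2
        have hlog2pos : (0 : ℝ) < Real.log 2 := by linarith
        have hd : 0 < ((lossF U f j₀ z t : ℝ) - 2 * (r16 * m)) := by linarith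
        nlinarith [mul_pos hd hlog2pos]
      have hterm' : (2 : ℝ) ^ (lossF U f j₀ z t) * tb j₀
          ≤ (2 : ℝ) ^ (lossF U f j₀ z t) * Wt U K j₀ z t * tb j₀ := by
        have hp : (0:ℝ) < (2 : ℝ) ^ (lossF U f j₀ z t) := by positivity
        nlinarith [htb j₀]
      linarith
    have hdg : (1 / 2 + 4 * r16) * m ≤ (((U j₀).filter (G.Adj z)).card : ℝ) := by
      have hd := (h1 j₀).2 z hz
      rw [hcast j₀ z] at hd
      exact hd
    have hdl := deg_lower G U f j₀ hGood z hz
    have hdlR : (((U j₀).filter (G.Adj z)).card : ℝ)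
        ≤ (((U j₀).filter ((Hg G U f j₀).Adj z)).card : ℝ) + (lossF U f j₀ z t : ℝ) := by
      exact_mod_cast hdl
    have hKu := hKub j₀
    have hsmj := hsm j₀
    have hreal : m + 2 * (K j₀ : ℝ) + 2
        ≤ 2 * (((U j₀).filter ((Hg G U f j₀).Adj z)).card : ℝ) := by
      linarith
    rw [hm_def] at hreal
    exact_mod_cast hreal
  -- the main induction
  have main : ∀ t : ℕ, t ≤ N → ∃ f : Fin N → Fin n → Fin n,
      Good G U f t ∧ Phi U K tb f t < 1 := by
    intro t
    induction t with
    | zero =>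
      intro _
      exact ⟨fun _ => id, fun j hj => absurd hj (Nat.not_lt_zero _), hPhi0lt _⟩
    | succ t ih =>
      intro htN1
      have htN : t < N := Nat.lt_of_succ_le htN1
      obtain ⟨f, hGood, hPhi⟩ := ih (le_of_lt htN)
      have hdeg := hdegstage t htN f hGood hPhi
      obtain ⟨g, hgpm, hgle⟩ :=
        stage_step G U K hK0 tb htb f t htN (h1 ⟨t, htN⟩).1 hdeg
      refine ⟨Function.update f ⟨t, htN⟩ g, ?_, lt_of_le_of_lt hgle hPhi⟩
      intro j hj
      by_cases hjt : j = (⟨t, htN⟩ : Fin N)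
      · subst hjt
        rw [Function.update_self]
        rw [Hg_congr G U (⟨t, htN⟩ : Fin N) (fun k hk => Function.update_of_ne
          (fun hkj => by rw [hkj] at hk; exact absurd hk (lt_irrefl _)) g f)]
        exact hgpm
      · have hjlt : (j : ℕ) < t := by
          have hne : (j : ℕ) ≠ t := fun h => hjt (Fin.ext h)
          omega
        rw [Function.update_of_ne hjt]
        rw [Hg_congr G U j (fun k hk => Function.update_of_ne
          (fun hkj => by
            rw [hkj] at hk
            have : t < t := lt_trans hk hjlt
            exact absurd this (lt_irrefl _)) g f)]
        exact hGood j hjlt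
  obtain ⟨f, hGoodN, -⟩ := main N le_rfl
  have hpm : ∀ i : Fin N, PMon (Hg G U f i) (U i) (f i) := fun i => hGoodN i i.isLt
  refine ⟨fun i => {e | ∃ x ∈ U i, e = s(x, f i x)}, ?_, ?_⟩
  · intro i
    constructor
    · rintro e ⟨x, hx, rfl⟩
      have hadj := (hpm i).adj hx
      refine ⟨(SimpleGraph.mem_edgeSet G).2 hadj.1, ?_⟩
      intro v hv
      rcases Sym2.mem_iff.1 hv with h | h
      · rw [h]; exact Finset.mem_coe.2 hx
      · rw [h]; exact Finset.mem_coe.2 ((hpm i).mem hx)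
    · intro v hv
      have hvU : v ∈ U i := Finset.mem_coe.1 hv
      refine ⟨s(v, f i v), ⟨⟨v, hvU, rfl⟩, Sym2.mem_mk_left v _⟩, ?_⟩
      rintro e ⟨⟨x, hxU, rfl⟩, hve⟩
      rcases Sym2.mem_iff.1 hve with h | h
      · rw [h]
      · have hfv : f i v = x := by rw [h, (hpm i).invol]
        rw [show s(v, f i v) = s(f i v, v) from Sym2.eq_swap, hfv, h]
  · intro i j hij
    rw [Set.disjoint_left]
    intro e hei hej
    have key : ∀ (a b : Fin N), (a : ℕ) < (b : ℕ) →
        e ∈ {e : Sym2 (Fin n) | ∃ x ∈ U a, e = s(x, f a x)} →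
        e ∈ {e : Sym2 (Fin n) | ∃ x ∈ U b, e = s(x, f b x)} → False := by
      intro a b hab hea heb
      obtain ⟨x, hxU, rfl⟩ := hea
      obtain ⟨y, hyU, hey⟩ := heb
      have hadj := (hpm b).adj hyU
      have hno := hadj.2.2.2 a hab
      rcases Sym2.eq_iff.1 hey with ⟨hc1, hc2⟩ | ⟨hc1, hc2⟩
      · exact hno.1 ⟨hc1 ▸ hxU, by rw [← hc1, hc2, hc1]⟩
      · exact hno.2 ⟨hc1 ▸ hxU, by rw [← hc1, hc2]⟩
    rcases Nat.lt_or_ge (i : ℕ) (j : ℕ) with h | h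
    · exact key i j h hei hej
    · have hlt : (j : ℕ) < (i : ℕ) :=
        lt_of_le_of_ne h (fun hh => hij (Fin.ext hh.symm))
      exact key j i hlt hej hei
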